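/- Let I be a non-empty set. Then the matrix algebra M_I(ℂ) is strong pseudo-amenable if and only if I is finite. -/

import Mathlib

noncomputable section

open ContinuousLinearMap NormedSpace

/-- A directed index system for nets. -/
structure DirSys : Type 1 where
  ι : Type
  le : ι → ι → Prop
  refl : ∀ i, le i i
  trans : ∀ {i j k}, le i j → le j k → le i k
  nonempty : Nonempty ι
  directed : ∀ i j, ∃ k, le i k ∧ le j k

/-- Convergence of a net indexed by a directed system, in a (pseudo)metric space. -/
def DirSys.Tendsto (D : DirSys) {X : Type*} [PseudoMetricSpace X] (m : D.ι → X) (x : X) : Prop :=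
  ∀ ε : ℝ, 0 < ε → ∃ i, ∀ j, D.le i j → dist (m j) x < ε

variable (A : Type*) [NonUnitalNormedRing A] [NormedSpace ℂ A]
  [IsScalarTower ℂ A A] [SMulCommClass ℂ A A]

/-- The continuous bilinear forms on `A`, i.e. the dual space of the projective tensor
product `A ⊗̂ A`. -/
abbrev BilForms := A →L[ℂ] StrongDual ℂ A

instance : NormedAddCommGroup (BilForms A) := ContinuousLinearMap.toNormedAddCommGroup

instance : NormedSpace ℂ (BilForms A) := ContinuousLinearMap.toNormedSpace

/-- The bidual `(A ⊗̂ A)**` of the projective tensor product, realized concretely as the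
dual space of the space of continuous bilinear forms on `A` (the latter being canonically,
isometrically, the dual of `A ⊗̂ A`). -/
abbrev TensorBidual := StrongDual ℂ (BilForms A)

/-- The bidual `A**` of `A`. -/
abbrev Bidual := StrongDual ℂ (StrongDual ℂ A)

variable {A}

/-- The elementary tensor `x ⊗ y`, viewed inside `(A ⊗̂ A)**` via the canonical isometric
embedding of `A ⊗̂ A` into its bidual. -/
def elemT (x y : A) : TensorBidual A :=
  (ContinuousLinearMap.apply ℂ ℂ y).comp (ContinuousLinearMap.apply ℂ (StrongDual ℂ A) x)

variable (A)

/-- The canonical isometric copy of `A ⊗̂ A` inside its bidual: the closure of the linear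
span of the elementary tensors. -/
def ptp : Submodule ℂ (TensorBidual A) :=
  (Submodule.span ℂ {m : TensorBidual A | ∃ x y : A, m = elemT x y}).topologicalClosure

/-- The map `f ↦ f·a` on bilinear forms, `(f·a)(x,y) = f(ax, y)`; predual of the left
module action of `A` on `(A ⊗̂ A)**`. -/
def leftBil (a : A) : BilForms A →L[ℂ] BilForms A :=
  (compL ℂ A A (StrongDual ℂ A)).flip (ContinuousLinearMap.mul ℂ A a)

/-- The map `f ↦ a·f` on bilinear forms, `(a·f)(x,y) = f(x, ya)`; predual of the right
module action of `A` on `(A ⊗̂ A)**`. -/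
def rightBil (a : A) : BilForms A →L[ℂ] BilForms A :=
  compL ℂ A (StrongDual ℂ A) (StrongDual ℂ A)
    ((compL ℂ A A ℂ).flip ((ContinuousLinearMap.mul ℂ A).flip a))

variable {A}

/-- The left module action `a · m` of `A` on `(A ⊗̂ A)**`, extending
`a · (x ⊗ y) = (a x) ⊗ y`. -/
def tsmulL (a : A) (m : TensorBidual A) : TensorBidual A := m.comp (leftBil A a)

/-- The right module action `m · a` of `A` on `(A ⊗̂ A)**`, extending
`(x ⊗ y) · a = x ⊗ (y a)`. -/
def tsmulR (a : A) (m : TensorBidual A) : TensorBidual A := m.comp (rightBil A a)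

variable (A)

/-- The adjoint `π_A* : A* → (A ⊗̂ A)*` of the product morphism `π_A`, namely
`(π_A* f)(x, y) = f (x y)`. -/
def piStar : StrongDual ℂ A →L[ℂ] BilForms A :=
  ((compL ℂ A (A →L[ℂ] A) (StrongDual ℂ A)).flip (ContinuousLinearMap.mul ℂ A)).comp
    (compL ℂ A A ℂ)

variable {A}

/-- The second adjoint `π_A** : (A ⊗̂ A)** → A**` of the product morphism. -/
def piSS (m : TensorBidual A) : Bidual A := m.comp (piStar A)

variable (A)

/-- The map `f ↦ f·a` on `A*`, `(f·a)(x) = f(ax)`. -/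
def dualROp (a : A) : StrongDual ℂ A →L[ℂ] StrongDual ℂ A :=
  (compL ℂ A A ℂ).flip (ContinuousLinearMap.mul ℂ A a)

/-- The map `f ↦ a·f` on `A*`, `(a·f)(x) = f(xa)`. -/
def dualLOp (a : A) : StrongDual ℂ A →L[ℂ] StrongDual ℂ A :=
  (compL ℂ A A ℂ).flip ((ContinuousLinearMap.mul ℂ A).flip a)

variable {A}

/-- The product `a · Φ` of `a ∈ A` and `Φ ∈ A**`: `(a·Φ)(f) = Φ(f·a)`. -/
def bsmulL (a : A) (Φ : Bidual A) : Bidual A := Φ.comp (dualROp A a)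

/-- The product `Φ · a` of `Φ ∈ A**` and `a ∈ A`: `(Φ·a)(f) = Φ(a·f)`. -/
def bsmulR (a : A) (Φ : Bidual A) : Bidual A := Φ.comp (dualLOp A a)

/-- The canonical isometric embedding of `A` into its bidual. -/
def inclB (a : A) : Bidual A := NormedSpace.inclusionInDoubleDual ℂ A a

variable (A)

/-- A Banach algebra `A` is *strong pseudo-amenable* if there is a (not necessarily bounded)
net `(m_α)` in `(A ⊗̂ A)**` such that `a·m_α − m_α·a → 0` and
`a·π_A**(m_α) = π_A**(m_α)·a → a` for every `a ∈ A`. -/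
def StrongPseudoAmenable : Prop :=
  ∃ (D : DirSys) (m : D.ι → TensorBidual A),
    (∀ a : A, D.Tendsto (fun α => tsmulL a (m α) - tsmulR a (m α)) 0) ∧
    (∀ (a : A) (α : D.ι), bsmulL a (piSS (m α)) = bsmulR a (piSS (m α))) ∧
    (∀ a : A, D.Tendsto (fun α => bsmulR a (piSS (m α))) (inclB a))

/-- A Banach algebra `A` is *pseudo-amenable* if there is a (not necessarily bounded)
net `(m_α)` in `A ⊗̂ A` such that `a·m_α − m_α·a → 0` and `π_A(m_α)a → a` for every `a ∈ A`. -/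
def PseudoAmenable : Prop :=
  ∃ (D : DirSys) (m : D.ι → TensorBidual A),
    (∀ α, m α ∈ ptp A) ∧
    (∀ a : A, D.Tendsto (fun α => tsmulL a (m α) - tsmulR a (m α)) 0) ∧
    (∀ a : A, D.Tendsto (fun α => bsmulR a (piSS (m α))) (inclB a))

/-- A Banach algebra `A` is *pseudo-contractible* if there is a net `(m_α)` in `A ⊗̂ A`
such that `a·m_α = m_α·a` and `π_A(m_α)a → a` for every `a ∈ A`. -/
def PseudoContractible : Prop :=
  ∃ (D : DirSys) (m : D.ι → TensorBidual A),
    (∀ α, m α ∈ ptp A) ∧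
    (∀ (a : A) (α : D.ι), tsmulL a (m α) = tsmulR a (m α)) ∧
    (∀ a : A, D.Tendsto (fun α => bsmulR a (piSS (m α))) (inclB a))

/-- A Banach algebra `A` is *amenable* if it has a bounded approximate diagonal: a bounded
net `(m_α)` in `A ⊗̂ A` such that `a·m_α − m_α·a → 0` and `π_A(m_α)a → a` for every `a ∈ A`. -/
def AmenableBanachAlgebra : Prop :=
  ∃ (D : DirSys) (m : D.ι → TensorBidual A) (C : ℝ),
    (∀ α, m α ∈ ptp A) ∧
    (∀ α, ‖m α‖ ≤ C) ∧
    (∀ a : A, D.Tendsto (fun α => tsmulL a (m α) - tsmulR a (m α)) 0) ∧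
    (∀ a : A, D.Tendsto (fun α => bsmulR a (piSS (m α))) (inclB a))

end

/-- `(M, e)` is a realization of the Banach algebra `M_I(ℂ)` of `I × I` complex matrices
with finite `ℓ¹`-norm: the `e i j` are the standard matrix units `ε_{i,j}`, finite linear
combinations of them carry the `ℓ¹`-norm, and they have dense linear span. -/
def IsMatrixUnitsL1 (I : Type) [DecidableEq I] (M : Type)
    [NonUnitalNormedRing M] [NormedSpace ℂ M] (e : I → I → M) : Prop :=
  (∀ i j k l : I, e i j * e k l = if j = k then e i l else 0) ∧
  (∀ (s : Finset (I × I)) (c : I × I → ℂ),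
      ‖∑ p ∈ s, c p • e p.1 p.2‖ = ∑ p ∈ s, ‖c p‖) ∧
  ((Submodule.span ℂ (Set.range fun p : I × I => e p.1 p.2)).topologicalClosure = ⊤)

/-!
If `I` is finite, `∑ᵢ εᵢₒ ⊗ εₒᵢ` commutes with every matrix unit and multiplies out to the
identity `∑ᵢ εᵢᵢ`, so the constant net at it does the job.

Conversely, let `Φ = π**(m_α)` with `‖Φ·εₒₒ − εₒₒ‖ < 1`, so that `Φ(ε*ₒₒ) ≠ 0` for the
coordinate functional `ε*ₒₒ`. The actions of `εₒⱼ` carry `ε*ₒⱼ` to `ε*ⱼⱼ` on one side and to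
`ε*ₒₒ` on the other, so `a·Φ = Φ·a` forces `Φ(ε*ⱼⱼ) = Φ(ε*ₒₒ)` for all `j`. As the dual of an
`ℓ¹`-space is an `ℓ∞`-space, `‖∑_{j∈s} ε*ⱼⱼ‖ ≤ 1`, hence `|s|·|Φ(ε*ₒₒ)| ≤ ‖Φ‖` for every finite
`s ⊆ I`, and `I` is finite.
-/

open ContinuousLinearMap

def DirSys.unit : DirSys :=
  ⟨Unit, fun _ _ => True, fun _ => trivial, fun _ _ => trivial, ⟨()⟩,
    fun _ _ => ⟨(), trivial, trivial⟩⟩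

lemma DirSys.tendsto_const (D : DirSys) {X : Type*} [PseudoMetricSpace X] (x : X) :
    D.Tendsto (fun _ => x) x :=
  fun _ hε => ⟨D.nonempty.some, fun _ _ => by rwa [dist_self]⟩

section BanachAlgebra

variable {A : Type*} [NonUnitalNormedRing A] [NormedSpace ℂ A]

@[simp] lemma elemT_apply (x y : A) (F : BilForms A) : elemT x y F = F x y := rfl

@[simp] lemma inclB_apply (a : A) (f : StrongDual ℂ A) : inclB a f = f a := rfl

variable [IsScalarTower ℂ A A] [SMulCommClass ℂ A A]

@[simp] lemma tsmulL_apply (a : A) (m : TensorBidual A) (F : BilForms A) :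
    tsmulL a m F = m (leftBil A a F) := rfl

@[simp] lemma tsmulR_apply (a : A) (m : TensorBidual A) (F : BilForms A) :
    tsmulR a m F = m (rightBil A a F) := rfl

@[simp] lemma leftBil_apply (a : A) (F : BilForms A) (x : A) :
    leftBil A a F x = F (a * x) := rfl

@[simp] lemma rightBil_apply (a : A) (F : BilForms A) (x y : A) :
    rightBil A a F x y = F x (y * a) := rfl

@[simp] lemma piStar_apply (f : StrongDual ℂ A) (x y : A) : piStar A f x y = f (x * y) := rfl

@[simp] lemma piSS_apply (m : TensorBidual A) (f : StrongDual ℂ A) :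
    piSS m f = m (piStar A f) := rfl

@[simp] lemma dualROp_apply (a : A) (f : StrongDual ℂ A) (x : A) :
    dualROp A a f x = f (a * x) := rfl

@[simp] lemma dualLOp_apply (a : A) (f : StrongDual ℂ A) (x : A) :
    dualLOp A a f x = f (x * a) := rfl

@[simp] lemma bsmulL_apply (a : A) (Φ : Bidual A) (f : StrongDual ℂ A) :
    bsmulL a Φ f = Φ (dualROp A a f) := rfl

@[simp] lemma bsmulR_apply (a : A) (Φ : Bidual A) (f : StrongDual ℂ A) :
    bsmulR a Φ f = Φ (dualLOp A a f) := rfl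

lemma strongPseudoAmenable_of_diagonal (m : TensorBidual A) (u : A)
    (hcomm : ∀ a, tsmulL a m = tsmulR a m) (hul : ∀ a, u * a = a) (hur : ∀ a, a * u = a)
    (hπ : piSS m = inclB u) : StrongPseudoAmenable A := by
  have hπL (a : A) : bsmulL a (piSS m) = inclB a := by ext f; simp [hπ, hur]
  have hπR (a : A) : bsmulR a (piSS m) = inclB a := by ext f; simp [hπ, hul]
  refine ⟨DirSys.unit, fun _ => m, fun a => ?_, fun a _ => by rw [hπL, hπR],
    fun a => ?_⟩
  · simpa only [hcomm, sub_self] using DirSys.unit.tendsto_const (0 : TensorBidual A)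
  · simpa only [hπR] using DirSys.unit.tendsto_const (inclB a)

end BanachAlgebra

namespace IsMatrixUnitsL1

variable {I : Type} [DecidableEq I] {M : Type} [NonUnitalNormedRing M] [NormedSpace ℂ M]
  {e : I → I → M}

lemma unit_mul_unit (hM : IsMatrixUnitsL1 I M e) (i j k l : I) :
    e i j * e k l = if j = k then e i l else 0 :=
  hM.1 i j k l

lemma norm_sum_smul_unit (hM : IsMatrixUnitsL1 I M e) (s : Finset (I × I)) (c : I × I → ℂ) :
    ‖∑ p ∈ s, c p • e p.1 p.2‖ = ∑ p ∈ s, ‖c p‖ :=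
  hM.2.1 s c

lemma continuousLinearMap_ext (hM : IsMatrixUnitsL1 I M e) {X : Type*}
    [NormedAddCommGroup X] [NormedSpace ℂ X] {S T : M →L[ℂ] X}
    (h : ∀ i j, S (e i j) = T (e i j)) : S = T := by
  refine ContinuousLinearMap.ext_on
    (Submodule.dense_iff_topologicalClosure_eq_top.mpr hM.2.2) ?_
  rintro _ ⟨p, rfl⟩
  exact h p.1 p.2

lemma linearIndependent (hM : IsMatrixUnitsL1 I M e) :
    LinearIndependent ℂ (fun p : I × I => e p.1 p.2) := by
  refine linearIndependent_iff'.mpr fun s c hc p hp => norm_eq_zero.mp ?_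
  have hnorm : ∑ q ∈ s, ‖c q‖ = 0 := by rw [← hM.norm_sum_smul_unit s c, hc, norm_zero]
  exact (Finset.sum_eq_zero_iff_of_nonneg fun q _ => norm_nonneg _).mp hnorm p hp

/-- On the span of the units the functional has norm at most `1` by the `ℓ¹`-norm identity;
Hahn–Banach extends it. -/
lemma exists_dual (hM : IsMatrixUnitsL1 I M e) (w : I × I → ℂ) (hw : ∀ p, ‖w p‖ ≤ 1) :
    ∃ f : StrongDual ℂ M, (∀ i j, f (e i j) = w (i, j)) ∧ ‖f‖ ≤ 1 := by
  set v : I × I → M := fun p => e p.1 p.2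
  have li : LinearIndependent ℂ v := hM.linearIndependent
  let ψ₀ : Submodule.span ℂ (Set.range v) →ₗ[ℂ] ℂ := Finsupp.linearCombination ℂ w ∘ₗ li.repr
  have hψ₀ (x) : ‖ψ₀ x‖ ≤ 1 * ‖x‖ := by
    set c := li.repr x
    have hx : (x : M) = ∑ p ∈ c.support, c p • v p := by
      rw [← li.linearCombination_repr x, Finsupp.linearCombination_apply, Finsupp.sum]
    calc ‖ψ₀ x‖ = ‖∑ p ∈ c.support, c p * w p‖ := by
          simp [ψ₀, c, Finsupp.linearCombination_apply, Finsupp.sum]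
      _ ≤ ∑ p ∈ c.support, ‖c p‖ := by
          refine (norm_sum_le _ _).trans (Finset.sum_le_sum fun p _ => ?_)
          simpa [norm_mul] using mul_le_mul_of_nonneg_left (hw p) (norm_nonneg (c p))
      _ = 1 * ‖x‖ := by rw [one_mul, Submodule.coe_norm, hx, hM.norm_sum_smul_unit]
  obtain ⟨f, hf, hfn⟩ := exists_extension_norm_eq _ (ψ₀.mkContinuous 1 hψ₀)
  refine ⟨f, fun i j => ?_, hfn ▸ LinearMap.mkContinuous_norm_le _ zero_le_one _⟩
  have hv : v (i, j) ∈ Submodule.span ℂ (Set.range v) := Submodule.subset_span ⟨(i, j), rfl⟩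
  simpa [ψ₀, li.repr_eq_single (i, j) ⟨v (i, j), hv⟩ rfl] using hf ⟨v (i, j), hv⟩

lemma exists_coord (hM : IsMatrixUnitsL1 I M e) (i j : I) :
    ∃ f : StrongDual ℂ M, (∀ k l, f (e k l) = if k = i ∧ l = j then 1 else 0) ∧ ‖f‖ ≤ 1 := by
  simpa using hM.exists_dual (fun p => if p = (i, j) then 1 else 0)
    fun _ => by split_ifs <;> simp

noncomputable def coord (hM : IsMatrixUnitsL1 I M e) (i j : I) : StrongDual ℂ M :=
  (hM.exists_coord i j).choose

lemma coord_unit (hM : IsMatrixUnitsL1 I M e) (i j k l : I) :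
    hM.coord i j (e k l) = if k = i ∧ l = j then 1 else 0 :=
  (hM.exists_coord i j).choose_spec.1 k l

lemma norm_coord_le (hM : IsMatrixUnitsL1 I M e) (i j : I) : ‖hM.coord i j‖ ≤ 1 :=
  (hM.exists_coord i j).choose_spec.2

lemma norm_sum_coord_diag_le (hM : IsMatrixUnitsL1 I M e) (s : Finset I) :
    ‖∑ j ∈ s, hM.coord j j‖ ≤ 1 := by
  obtain ⟨g, hg, hgn⟩ := hM.exists_dual (fun p => if p.1 = p.2 ∧ p.1 ∈ s then 1 else 0)
    fun _ => by split_ifs <;> simp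
  suffices g = ∑ j ∈ s, hM.coord j j from this ▸ hgn
  refine hM.continuousLinearMap_ext fun k l => ?_
  by_cases hkl : k = l
  · subst hkl
    simp [hg, coord_unit]
  · rw [hg, if_neg fun h => hkl h.1, FunLike.coe_sum, Finset.sum_apply]
    exact (Finset.sum_eq_zero fun j _ => by
      rw [coord_unit, if_neg fun h => hkl (h.1.trans h.2.symm)]).symm

variable [IsScalarTower ℂ M M] [SMulCommClass ℂ M M]

lemma dualROp_unit_coord (hM : IsMatrixUnitsL1 I M e) (i j l : I) :
    dualROp M (e i j) (hM.coord i l) = hM.coord j l := by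
  refine hM.continuousLinearMap_ext fun a b => ?_
  by_cases hja : j = a
  · subst hja
    simp [hM.unit_mul_unit, coord_unit]
  · simp [hM.unit_mul_unit, coord_unit, hja, Ne.symm hja]

lemma dualLOp_unit_coord (hM : IsMatrixUnitsL1 I M e) (i j k : I) :
    dualLOp M (e i j) (hM.coord k j) = hM.coord k i := by
  refine hM.continuousLinearMap_ext fun a b => ?_
  by_cases hbi : b = i
  · subst hbi
    simp [hM.unit_mul_unit, coord_unit]
  · simp [hM.unit_mul_unit, coord_unit, hbi]

lemma apply_coord_diag_eq (hM : IsMatrixUnitsL1 I M e) {Φ : Bidual M}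
    (hΦ : ∀ i j, bsmulL (e i j) Φ = bsmulR (e i j) Φ) (i j : I) :
    Φ (hM.coord j j) = Φ (hM.coord i i) := by
  simpa [dualROp_unit_coord, dualLOp_unit_coord] using congr($(hΦ i j) (hM.coord i j))

lemma finite_of_central (hM : IsMatrixUnitsL1 I M e) {Φ : Bidual M}
    (hΦ : ∀ i j, bsmulL (e i j) Φ = bsmulR (e i j) Φ) {o : I} (ho : Φ (hM.coord o o) ≠ 0) :
    Finite I := by
  have hcard (s : Finset I) : s.card * ‖Φ (hM.coord o o)‖ ≤ ‖Φ‖ :=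
    calc s.card * ‖Φ (hM.coord o o)‖ = ‖Φ (∑ j ∈ s, hM.coord j j)‖ := by
          simp [map_sum, hM.apply_coord_diag_eq hΦ o]
      _ ≤ ‖Φ‖ * ‖∑ j ∈ s, hM.coord j j‖ := le_opNorm _ _
      _ ≤ ‖Φ‖ := mul_le_of_le_one_right (norm_nonneg Φ) (hM.norm_sum_coord_diag_le s)
  by_contra hfin
  have := not_finite_iff_infinite.mp hfin
  obtain ⟨n, hn⟩ := exists_nat_gt (‖Φ‖ / ‖Φ (hM.coord o o)‖)
  obtain ⟨s, rfl⟩ := Infinite.exists_subset_card_eq I n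
  rw [div_lt_iff₀ (norm_pos_iff.mpr ho)] at hn
  linarith [hcard s]

lemma apply_coord_ne_zero (hM : IsMatrixUnitsL1 I M e) {Φ : Bidual M} {o : I}
    (h : dist (bsmulR (e o o) Φ) (inclB (e o o)) < 1) : Φ (hM.coord o o) ≠ 0 := by
  intro h0
  have hval : (bsmulR (e o o) Φ - inclB (e o o)) (hM.coord o o) = -1 := by
    simp [dualLOp_unit_coord, coord_unit, h0]
  have := le_opNorm (bsmulR (e o o) Φ - inclB (e o o)) (hM.coord o o)
  rw [hval, norm_neg, norm_one, ← dist_eq_norm] at this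
  linarith [mul_le_of_le_one_right (dist_nonneg (x := bsmulR (e o o) Φ) (y := inclB (e o o)))
    (hM.norm_coord_le o o)]

lemma finite_of_strongPseudoAmenable (hM : IsMatrixUnitsL1 I M e) [Nonempty I]
    (h : StrongPseudoAmenable M) : Finite I := by
  obtain ⟨D, m, -, hcentral, happrox⟩ := h
  let o := Classical.arbitrary I
  obtain ⟨α, hα⟩ := happrox (e o o) 1 one_pos
  exact hM.finite_of_central (fun i j => hcentral (e i j) α)
    (hM.apply_coord_ne_zero (hα α (D.refl α)))

lemma tsmulL_eq_tsmulR (hM : IsMatrixUnitsL1 I M e) {m : TensorBidual M}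
    (h : ∀ i j, tsmulL (e i j) m = tsmulR (e i j) m) (a : M) : tsmulL a m = tsmulR a m := by
  -- `L a` and `R a` are `tsmulL a m` and `tsmulR a m` by definition.
  let L : M →L[ℂ] TensorBidual M :=
    compL ℂ _ _ ℂ m ∘L (compL ℂ M M (StrongDual ℂ M)).flip ∘L mul ℂ M
  let R : M →L[ℂ] TensorBidual M :=
    compL ℂ _ _ ℂ m ∘L compL ℂ M _ _ ∘L (compL ℂ M M ℂ).flip ∘L (mul ℂ M).flip
  exact congr($(hM.continuousLinearMap_ext (S := L) (T := R) h) a)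

variable [Fintype I]

lemma sum_diag_mul (hM : IsMatrixUnitsL1 I M e) (a : M) : (∑ i, e i i) * a = a := by
  suffices mul ℂ M (∑ i, e i i) = ContinuousLinearMap.id ℂ M from congr($this a)
  refine hM.continuousLinearMap_ext fun k l => ?_
  simp [hM.unit_mul_unit]

lemma mul_sum_diag (hM : IsMatrixUnitsL1 I M e) (a : M) : a * ∑ i, e i i = a := by
  suffices (mul ℂ M).flip (∑ i, e i i) = ContinuousLinearMap.id ℂ M from congr($this a)
  refine hM.continuousLinearMap_ext fun k l => ?_
  simp [hM.unit_mul_unit]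

noncomputable def diagonal (e : I → I → M) (o : I) : TensorBidual M :=
  ∑ i, elemT (e i o) (e o i)

lemma tsmulL_unit_diagonal (hM : IsMatrixUnitsL1 I M e) (o k l : I) :
    tsmulL (e k l) (diagonal e o) = elemT (e k o) (e o l) := by
  ext F
  simp [diagonal, hM.unit_mul_unit, apply_ite, ite_apply]

lemma tsmulR_unit_diagonal (hM : IsMatrixUnitsL1 I M e) (o k l : I) :
    tsmulR (e k l) (diagonal e o) = elemT (e k o) (e o l) := by
  ext F
  simp [diagonal, hM.unit_mul_unit, apply_ite]

lemma piSS_diagonal (hM : IsMatrixUnitsL1 I M e) (o : I) :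
    piSS (diagonal e o) = inclB (∑ i, e i i) := by
  ext f
  simp [diagonal, hM.unit_mul_unit]

lemma strongPseudoAmenable (hM : IsMatrixUnitsL1 I M e) (o : I) : StrongPseudoAmenable M :=
  strongPseudoAmenable_of_diagonal (diagonal e o) _
    (hM.tsmulL_eq_tsmulR fun k l => by rw [hM.tsmulL_unit_diagonal, hM.tsmulR_unit_diagonal])
    hM.sum_diag_mul hM.mul_sum_diag (hM.piSS_diagonal o)

end IsMatrixUnitsL1

theorem strongPseudoAmenable_matrixAlgebra_iff_general
    (I : Type) [Nonempty I] [DecidableEq I]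
    (M : Type) [NonUnitalNormedRing M] [NormedSpace ℂ M] [IsScalarTower ℂ M M]
    [SMulCommClass ℂ M M]
    (e : I → I → M) (hM : IsMatrixUnitsL1 I M e) :
    StrongPseudoAmenable M ↔ Finite I := by
  refine ⟨hM.finite_of_strongPseudoAmenable, fun _ => ?_⟩
  have := Fintype.ofFinite I
  exact hM.strongPseudoAmenable (Classical.arbitrary I)

/-- Let `I` be a non-empty set.  Then the matrix algebra `M_I(ℂ)` is
strong pseudo-amenable if and only if `I` is finite. -/
theorem strongPseudoAmenable_matrixAlgebra_iff
    (I : Type) [Nonempty I] [DecidableEq I]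
    (M : Type) [NonUnitalNormedRing M] [NormedSpace ℂ M] [IsScalarTower ℂ M M]
    [SMulCommClass ℂ M M] [CompleteSpace M]
    (e : I → I → M) (hM : IsMatrixUnitsL1 I M e) :
    StrongPseudoAmenable M ↔ Finite I :=
  strongPseudoAmenable_matrixAlgebra_iff_general I M e hM
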